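/- Let f ∈ P = ℂ[X_0, X_1, X_2] be a squarefree homogeneous polynomial of degree d ≥ 2 such that the Krull dimension of P/J(f) is at most 1, and let τ be the stable value of dim_ℂ (P/J(f))_k for large k (the global Tjurina number). If the syzygy module Syz = {(a_0, a_1, a_2) ∈ P³ : a_0·∂f/∂X_0 + a_1·∂f/∂X_1 + a_2·∂f/∂X_2 = 0} is a free graded P-module with a homogeneous basis of two syzygies, then (d−1)² − I ≤ τ, where I = (d−1)²/4 if d is odd and I = d(d−2)/4 if d is even. -/

import Mathlib

open MvPolynomial

noncomputable section

/-- The polynomial ring `P = ℂ[X_0, X_1, X_2]`. -/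
abbrev P3 : Type := MvPolynomial (Fin 3) ℂ

/-- The gradient (jacobian) ideal `J(f) = (∂f/∂X_0, ∂f/∂X_1, ∂f/∂X_2)`. -/
def jacobianIdeal3 (f : P3) : Ideal P3 :=
  Ideal.span (Set.range fun i => MvPolynomial.pderiv i f)

/-- The degree-`k` graded piece of `P/I`: the image in `P/I` of the space of
homogeneous polynomials of degree `k`, viewed as a `ℂ`-subspace. -/
def quotPiece3 (I : Ideal P3) (k : ℕ) : Submodule ℂ (P3 ⧸ I) :=
  Submodule.map (Ideal.Quotient.mkₐ ℂ I).toLinearMap (homogeneousSubmodule (Fin 3) ℂ k)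

/-- The module of syzygies of the partial derivatives of `f`:
triples `(a_0, a_1, a_2)` with `a_0·∂f/∂X_0 + a_1·∂f/∂X_1 + a_2·∂f/∂X_2 = 0`. -/
def syzygyModule (f : P3) : Submodule P3 (Fin 3 → P3) where
  carrier := {a | ∑ i, a i * MvPolynomial.pderiv i f = 0}
  zero_mem' := by simp
  add_mem' := by
    intro a b ha hb
    simp only [Set.mem_setOf_eq] at *
    simp [Pi.add_apply, add_mul, Finset.sum_add_distrib, ha, hb]
  smul_mem' := by
    intro c a ha
    simp only [Set.mem_setOf_eq] at *
    simp [Pi.smul_apply, smul_eq_mul, mul_assoc, ← Finset.mul_sum, ha]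

/-!
If the syzygies are freely generated by homogeneous `s, t` of degrees `a, b`, the graded exact
sequence `0 → Syz_e → P_e³ → P_{e+d-1} → (P/J)_{e+d-1} → 0` gives
`dim (P/J)_{e+d-1} = N(e+d-1) - 3 N(e) + N(e-a) + N(e-b)` with `N(n) = (n+2).choose 2`.
Its quadratic terms in `e` cancel, so it is eventually constant only if the linear part vanishes,
i.e. `a + b = d - 1`; its value is then `τ = (d-1)² - ab ≥ (d-1)² - ⌊(d-1)²/4⌋`.
-/

open Module

theorem Submodule.finrank_map_add_finrank_inf_ker {K V W : Type*} [DivisionRing K]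
    [AddCommGroup V] [Module K V] [AddCommGroup W] [Module K W] (T : V →ₗ[K] W) (p : Submodule K V)
    [FiniteDimensional K p] :
    finrank K (p.map T) + finrank K ↥(p ⊓ LinearMap.ker T) = finrank K p := by
  rw [← LinearMap.range_domRestrict, ← Submodule.map_comap_subtype,
    Submodule.finrank_map_subtype_eq, ← LinearMap.ker_domRestrict,
    LinearMap.finrank_range_add_finrank_ker]

theorem Finsupp.setOf_degree_eq_finsuppAntidiag {σ : Type*} [Fintype σ] [DecidableEq σ] (n : ℕ) :
    {d : σ →₀ ℕ | d.degree = n} = ((Finset.univ : Finset σ).finsuppAntidiag n : Set (σ →₀ ℕ)) := by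
  ext d
  simp [Finsupp.degree_eq_sum]

namespace MvPolynomial

section CommSemiring

variable {σ R : Type*} [CommSemiring R]

theorem homogeneousComponent_add_mul_of_isHomogeneous {φ ψ : MvPolynomial σ R} {m : ℕ}
    (hψ : ψ.IsHomogeneous m) (n : ℕ) :
    homogeneousComponent (n + m) (φ * ψ) = homogeneousComponent n φ * ψ := by
  classical
  let := gradedAlgebra (σ := σ) (R := R)
  rw [← decomposition.decompose'_apply, ← decomposition.decompose'_apply]
  exact DirectSum.coe_decompose_mul_add_of_right_mem (homogeneousSubmodule σ R) hψ

theorem homogeneousComponent_sum_mul {ι : Type*} (s : Finset ι) (c g : ι → MvPolynomial σ R)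
    {deg n : ι → ℕ} {N : ℕ} (hg : ∀ i, (g i).IsHomogeneous (deg i)) (hN : ∀ i, n i + deg i = N) :
    homogeneousComponent N (∑ i ∈ s, c i * g i) =
      ∑ i ∈ s, homogeneousComponent (n i) (c i) * g i := by
  rw [map_sum]
  refine Finset.sum_congr rfl fun i _ => ?_
  rw [← hN i, homogeneousComponent_add_mul_of_isHomogeneous (hg i)]

end CommSemiring

section Field

variable {σ K : Type*} [Field K] [Fintype σ]

instance (n : ℕ) : Module.Finite K (homogeneousSubmodule σ K n) := by
  classical
  rw [homogeneousSubmodule_eq_finsupp_supported]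
  have : Finite {d : σ →₀ ℕ | d.degree = n} := by
    rw [Finsupp.setOf_degree_eq_finsuppAntidiag]
    infer_instance
  exact Module.Finite.of_basis (basisRestrictSupport K _)

theorem finrank_homogeneousSubmodule (n : ℕ) :
    finrank K (homogeneousSubmodule σ K n) = (Fintype.card σ + n - 1).choose n := by
  classical
  rw [homogeneousSubmodule_eq_finsupp_supported,
    ← restrictSupport, finrank_eq_nat_card_basis (basisRestrictSupport K _),
    Finsupp.setOf_degree_eq_finsuppAntidiag, Nat.card_coe_set_eq, Set.ncard_coe_finset,
    Finset.card_finsuppAntidiag_nat_eq_choose, Finset.card_univ]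

end Field

section Combination

variable {σ R ι : Type*} [CommSemiring R] [Fintype ι]

def homogeneousLinearCombination (g : ι → MvPolynomial σ R) (e : ℕ) :
    (ι → homogeneousSubmodule σ R e) →ₗ[R] MvPolynomial σ R :=
  (Fintype.linearCombination (MvPolynomial σ R) g).restrictScalars R ∘ₗ
    LinearMap.piMap fun _ => (homogeneousSubmodule σ R e).subtype

theorem homogeneousLinearCombination_apply (g : ι → MvPolynomial σ R) (e : ℕ)
    (x : ι → homogeneousSubmodule σ R e) :
    homogeneousLinearCombination g e x = ∑ i, (x i : MvPolynomial σ R) * g i := by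
  simp [homogeneousLinearCombination, Fintype.linearCombination_apply]

theorem range_homogeneousLinearCombination {g : ι → MvPolynomial σ R} {D : ℕ}
    (hg : ∀ i, (g i).IsHomogeneous D) (e : ℕ) :
    LinearMap.range (homogeneousLinearCombination g e) =
      homogeneousSubmodule σ R (e + D) ⊓ (Ideal.span (Set.range g)).restrictScalars R := by
  ext p
  simp only [LinearMap.mem_range, Submodule.mem_inf, Submodule.restrictScalars_mem,
    Ideal.mem_span_range_iff_exists_fun, homogeneousLinearCombination_apply]
  constructor
  · rintro ⟨x, rfl⟩
    refine ⟨IsHomogeneous.sum _ _ _ fun i _ => (x i).2.mul (hg i), fun i => x i, rfl⟩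
  · rintro ⟨hp, c, rfl⟩
    refine ⟨fun i => ⟨homogeneousComponent e (c i), homogeneousComponent_mem e (c i)⟩, ?_⟩
    rw [← homogeneousComponent_sum_mul _ c g hg (fun _ => rfl), homogeneousComponent_of_mem hp,
      if_pos rfl]

end Combination

section Count

variable {σ K ι κ : Type*} [Field K] [Fintype σ] [Fintype ι] [Fintype κ]

theorem finrank_ker_homogeneousLinearCombination {g : ι → MvPolynomial σ K}
    (B : Basis κ (MvPolynomial σ K)
      (LinearMap.ker (Fintype.linearCombination (MvPolynomial σ K) g)))
    {deg m : κ → ℕ} {e : ℕ} (hB : ∀ k i, ((B k : ι → MvPolynomial σ K) i).IsHomogeneous (deg k))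
    (he : ∀ k, m k + deg k = e) :
    finrank K (LinearMap.ker (homogeneousLinearCombination g e)) =
      ∑ k, finrank K (homogeneousSubmodule σ K (m k)) := by
  let incl : (ι → homogeneousSubmodule σ K e) →ₗ[K] ι → MvPolynomial σ K :=
    LinearMap.piMap fun _ => (homogeneousSubmodule σ K e).subtype
  let Ψ : ((k : κ) → homogeneousSubmodule σ K (m k)) →ₗ[K] ι → MvPolynomial σ K :=
    ((LinearMap.ker (Fintype.linearCombination _ g)).subtype ∘ₗ
        B.equivFun.symm.toLinearMap).restrictScalars K ∘ₗ
      LinearMap.piMap fun k => (homogeneousSubmodule σ K (m k)).subtype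
  have hΨ : ∀ c i, Ψ c i = ∑ k, (c k : MvPolynomial σ K) * (B k : ι → MvPolynomial σ K) i := by
    intro c i
    simp [Ψ, Basis.equivFun_symm_apply, Finset.sum_apply]
  have hincl : Function.Injective incl := Function.Injective.piMap fun _ => Subtype.val_injective
  have hΨinj : Function.Injective Ψ :=
    (Subtype.val_injective.comp B.equivFun.symm.injective).comp
      (Function.Injective.piMap fun _ => Subtype.val_injective)
  -- a degree-`e` syzygy is reproduced by the degree-`m k` components of its basis coordinates
  have hmap : (LinearMap.ker (homogeneousLinearCombination g e)).map incl = LinearMap.range Ψ := by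
    ext x
    simp only [Submodule.mem_map, LinearMap.mem_ker, LinearMap.mem_range]
    constructor
    · rintro ⟨y, hy, rfl⟩
      let z : LinearMap.ker (Fintype.linearCombination _ g) := ⟨incl y, hy⟩
      refine ⟨fun k => ⟨homogeneousComponent (m k) (B.repr z k), homogeneousComponent_mem _ _⟩, ?_⟩
      funext i
      have hyi : (y i : MvPolynomial σ K) = ∑ k, B.repr z k * (B k : ι → MvPolynomial σ K) i := by
        have h := congrArg (fun w : LinearMap.ker _ => (w : ι → MvPolynomial σ K) i) (B.sum_repr z)
        simp only [Submodule.coe_sum, Submodule.coe_smul, Finset.sum_apply, Pi.smul_apply,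
          smul_eq_mul] at h
        exact h.symm
      rw [hΨ, ← homogeneousComponent_sum_mul _ _ _ (hB · i) he, ← hyi,
        homogeneousComponent_of_mem (y i).2, if_pos rfl]
      rfl
    · rintro ⟨c, rfl⟩
      refine ⟨fun i => ⟨Ψ c i, ?_⟩, (B.equivFun.symm _).2, rfl⟩
      rw [hΨ]
      exact IsHomogeneous.sum _ _ _ fun k _ => he k ▸ (c k).2.mul (hB k i)
  rw [(Submodule.equivMapOfInjective incl hincl _).finrank_eq, hmap,
    LinearMap.finrank_range_of_inj hΨinj, finrank_pi_fintype]

theorem finrank_map_mkₐ_homogeneousSubmodule_add {g : ι → MvPolynomial σ K} {D : ℕ}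
    (hg : ∀ i, (g i).IsHomogeneous D)
    (B : Basis κ (MvPolynomial σ K)
      (LinearMap.ker (Fintype.linearCombination (MvPolynomial σ K) g)))
    {deg m : κ → ℕ} {e : ℕ} (hB : ∀ k i, ((B k : ι → MvPolynomial σ K) i).IsHomogeneous (deg k))
    (he : ∀ k, m k + deg k = e) :
    finrank K ((homogeneousSubmodule σ K (e + D)).map
        (Ideal.Quotient.mkₐ K (Ideal.span (Set.range g))).toLinearMap) +
      Fintype.card ι * finrank K (homogeneousSubmodule σ K e) =
      finrank K (homogeneousSubmodule σ K (e + D)) +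
        ∑ k, finrank K (homogeneousSubmodule σ K (m k)) := by
  have hker : LinearMap.ker (Ideal.Quotient.mkₐ K (Ideal.span (Set.range g))).toLinearMap =
      (Ideal.span (Set.range g)).restrictScalars K := by
    ext p
    simp [Ideal.Quotient.eq_zero_iff_mem]
  have hquot := Submodule.finrank_map_add_finrank_inf_ker
    (Ideal.Quotient.mkₐ K (Ideal.span (Set.range g))).toLinearMap
    (homogeneousSubmodule σ K (e + D))
  rw [hker, ← range_homogeneousLinearCombination hg] at hquot
  have hcomb := LinearMap.finrank_range_add_finrank_ker (homogeneousLinearCombination g e)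
  rw [finrank_ker_homogeneousLinearCombination B hB he, finrank_pi_fintype, Finset.sum_const,
    Finset.card_univ, smul_eq_mul] at hcomb
  omega

end Count

end MvPolynomial

theorem add_eq_and_add_mul_eq_sq_of_choose_two {τ a b D x : ℕ}
    (h : ∀ y, x ≤ y → τ + 3 * (a + b + y + 2).choose 2 =
      (a + b + y + D + 2).choose 2 + (b + y + 2).choose 2 + (a + y + 2).choose 2) :
    a + b = D ∧ τ + a * b = D ^ 2 := by
  have hq : ∀ y, x ≤ y → (τ : ℚ) + 3 * ((a + b + y + 2) * (a + b + y + 1) / 2) =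
      (a + b + y + D + 2) * (a + b + y + D + 1) / 2 + (b + y + 2) * (b + y + 1) / 2 +
        (a + y + 2) * (a + y + 1) / 2 := fun y hy => by
    have := congrArg (Nat.cast : ℕ → ℚ) (h y hy)
    push_cast [Nat.cast_choose_two] at this
    linear_combination this
  have h0 := hq x le_rfl
  have h1 := hq (x + 1) (Nat.le_succ x)
  have hab : (a : ℚ) + b = D := by
    push_cast at h1
    linear_combination h1 - h0
  refine ⟨by exact_mod_cast hab, ?_⟩
  have : (τ : ℚ) + a * b = D ^ 2 := by
    rw [← hab] at h0 ⊢
    linear_combination h0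
  exact_mod_cast this

theorem sq_sub_sq_div_four_le {τ a b D : ℕ} (hab : a + b = D) (h : τ + a * b = D ^ 2) :
    D ^ 2 - D ^ 2 / 4 ≤ τ := by
  have : a * b ≤ D ^ 2 / 4 := by
    rw [Nat.le_div_iff_mul_le four_pos, ← hab, mul_comm]
    exact (mul_assoc 4 a b).symm.trans_le (four_mul_le_sq_add a b)
  omega

theorem ite_odd_div_four_eq (d : ℕ) :
    (if Odd d then (d - 1) ^ 2 / 4 else d * (d - 2) / 4) = (d - 1) ^ 2 / 4 := by
  split_ifs with hd
  · rfl
  obtain ⟨k, rfl⟩ := Nat.not_odd_iff_even.mp hd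
  rcases k with _ | k
  · rfl
  have h1 : (k + 1 + (k + 1)) * (k + 1 + (k + 1) - 2) = 4 * (k * (k + 1)) := by
    rw [show k + 1 + (k + 1) - 2 = 2 * k by omega]
    ring
  have h2 : (k + 1 + (k + 1) - 1) ^ 2 = 4 * (k * (k + 1)) + 1 := by
    rw [show k + 1 + (k + 1) - 1 = 2 * k + 1 by omega]
    ring
  omega

theorem syzygyModule_eq_ker (f : P3) :
    syzygyModule f = LinearMap.ker (Fintype.linearCombination P3 fun i => pderiv i f) := by
  ext a
  simp [syzygyModule, Fintype.linearCombination_apply]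

theorem finrank_homogeneousSubmodule_fin_three (n : ℕ) :
    finrank ℂ (homogeneousSubmodule (Fin 3) ℂ n) = (n + 2).choose 2 := by
  rw [finrank_homogeneousSubmodule, Fintype.card_fin, show 3 + n - 1 = n + 2 by omega,
    Nat.choose_symm_add]

theorem finrank_quotPiece3_jacobianIdeal3_add {f : P3} {d a b : ℕ} (hfh : f.IsHomogeneous d)
    (B : Basis (Fin 2) P3 (syzygyModule f))
    (hB0 : ∀ i, ((B 0 : Fin 3 → P3) i).IsHomogeneous a)
    (hB1 : ∀ i, ((B 1 : Fin 3 → P3) i).IsHomogeneous b) (y : ℕ) :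
    finrank ℂ (quotPiece3 (jacobianIdeal3 f) (a + b + y + (d - 1))) +
        3 * (a + b + y + 2).choose 2 =
      (a + b + y + (d - 1) + 2).choose 2 + (b + y + 2).choose 2 + (a + y + 2).choose 2 := by
  have hcount := finrank_map_mkₐ_homogeneousSubmodule_add (fun i => hfh.pderiv (i := i))
    (B.map (LinearEquiv.ofEq _ _ (syzygyModule_eq_ker f))) (deg := ![a, b]) (m := ![b + y, a + y])
    (e := a + b + y) (by simpa [Fin.forall_fin_two] using ⟨hB0, hB1⟩)
    (by simp only [Fin.forall_fin_two, Matrix.cons_val_zero, Matrix.cons_val_one]; omega)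
  simp only [finrank_homogeneousSubmodule_fin_three, Fin.sum_univ_two, Fintype.card_fin,
    Matrix.cons_val_zero, Matrix.cons_val_one] at hcount
  rw [← add_assoc] at hcount
  exact hcount

theorem stmt_10_general (f : P3) (d : ℕ) (hfh : f.IsHomogeneous d)
    (τ : ℕ)
    (hτ : ∃ N : ℕ, ∀ k, N ≤ k →
      Module.finrank ℂ (quotPiece3 (jacobianIdeal3 f) k) = τ)
    (a b : ℕ) (s t : Fin 3 → P3)
    (hsh : ∀ i, (s i).IsHomogeneous a) (hth : ∀ i, (t i).IsHomogeneous b)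
    (B : Module.Basis (Fin 2) P3 (syzygyModule f))
    (hB0 : (B 0).val = s) (hB1 : (B 1).val = t) :
    (d - 1) ^ 2 - (if Odd d then (d - 1) ^ 2 / 4 else d * (d - 2) / 4) ≤ τ := by
  obtain ⟨N, hN⟩ := hτ
  obtain ⟨hab, hτab⟩ := add_eq_and_add_mul_eq_sq_of_choose_two (τ := τ) (a := a) (b := b)
      (D := d - 1) (x := N) fun y hy => by
    rw [← hN (a + b + y + (d - 1)) (by omega)]
    exact finrank_quotPiece3_jacobianIdeal3_add hfh B (hB0 ▸ hsh) (hB1 ▸ hth) y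
  rw [ite_odd_div_four_eq]
  exact sq_sub_sq_div_four_le hab hτab

theorem stmt_10 (f : P3) (d : ℕ) (hd : 2 ≤ d) (hsf : Squarefree f) (hfh : f.IsHomogeneous d)
    (hdim : ringKrullDim (P3 ⧸ jacobianIdeal3 f) ≤ 1)
    (τ : ℕ)
    (hτ : ∃ N : ℕ, ∀ k, N ≤ k →
      Module.finrank ℂ (quotPiece3 (jacobianIdeal3 f) k) = τ)
    (a b : ℕ) (s t : Fin 3 → P3)
    (hs : s ∈ syzygyModule f) (ht : t ∈ syzygyModule f)
    (hsh : ∀ i, (s i).IsHomogeneous a) (hth : ∀ i, (t i).IsHomogeneous b)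
    (B : Module.Basis (Fin 2) P3 (syzygyModule f))
    (hB0 : (B 0).val = s) (hB1 : (B 1).val = t) :
    (d - 1) ^ 2 - (if Odd d then (d - 1) ^ 2 / 4 else d * (d - 2) / 4) ≤ τ :=
  stmt_10_general f d hfh τ hτ a b s t hsh hth B hB0 hB1

end
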